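/- arXiv:2510.11054 — 5 statements merged into one kernel-verified Lean document; each statement's English description precedes it below -/
import Mathlib

section
/- Let n be a positive integer, let v_0, v_1, ..., v_n be row vectors of length n over a commutative ring, and let β_1, ..., β_n, γ_1, ..., γ_n be scalars. Then the determinant of the n×n matrix whose i-th row is β_i v_{i-1} + γ_i v_i equals the sum over k = 0, ..., n of (∏_{i=1}^k β_i)(∏_{j=k+1}^n γ_j) times the determinant of the matrix with rows v_0, ..., v_{k-1}, v_{k+1}, ..., v_n. -/
/-!
The identity holds for every alternating map `f` in place of the determinant, by induction on `n`.
Splitting the first row `β₀ v₀ + γ₀ v₁` by linearity and applying the induction hypothesis to the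
alternating maps `f (v₀, ·)` and `f (v₁, ·)` of the remaining rows, every term of the second
expansion except `k = 0` repeats `v₁` and vanishes.
-/

theorem Fin.comp_succ_succAbove {α : Type*} {n : ℕ} (v : Fin (n + 2) → α) (k : Fin (n + 1)) :
    v ∘ k.succ.succAbove = Matrix.vecCons (v 0) ((v ∘ Fin.succ) ∘ k.succAbove) := by
  funext i
  cases i using Fin.cases <;> simp [Fin.succ_succAbove_succ]

namespace AlternatingMap

variable {R M N : Type*} [CommSemiring R] [AddCommMonoid M] [Module R M] [AddCommMonoid N]
  [Module R N]

theorem map_smul_add_smul_succ : ∀ {n : ℕ} (f : M [⋀^Fin n]→ₗ[R] N) (v : Fin (n + 1) → M)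
    (β γ : Fin n → R),
    f (fun i => β i • v i.castSucc + γ i • v i.succ) =
      ∑ k : Fin (n + 1), (∏ i, if i.castSucc < k then β i else γ i) • f (v ∘ k.succAbove)
  | 0, f, v, β, γ => by
    simpa using congrArg f (Subsingleton.elim _ _)
  | n + 1, f, v, β, γ => by
    set w := v ∘ Fin.succ
    have hsplit : (fun i : Fin (n + 1) => β i • v i.castSucc + γ i • v i.succ) =
        Matrix.vecCons (β 0 • v 0 + γ 0 • v 1)
          (fun i => β i.succ • w i.castSucc + γ i.succ • w i.succ) := by
      funext i
      cases i using Fin.cases <;> simp [w]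
    have hγ : ∑ k : Fin (n + 1), (∏ i : Fin n, if i.castSucc < k then β i.succ else γ i.succ) •
        f.curryLeft (v 1) (w ∘ k.succAbove) = (∏ i : Fin n, γ i.succ) • f w := by
      rw [Finset.sum_eq_single 0 (fun k _ hk => ?_) (by simp)]
      · rw [Fin.succAbove_zero, curryLeft_apply_apply]
        exact congrArg _ (congrArg f (Fin.cons_self_tail w))
      obtain ⟨z, hz⟩ := Fin.exists_succAbove_eq hk.symm
      rw [curryLeft_apply_apply, f.map_eq_zero_of_eq _ (i := 0) (j := z.succ) (by simp [w, hz])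
        (Fin.succ_ne_zero z).symm, smul_zero]
    rw [hsplit, ← curryLeft_apply_apply, map_add, map_smul, map_smul, add_apply, smul_apply,
      smul_apply, map_smul_add_smul_succ (f.curryLeft (v 0)), map_smul_add_smul_succ, hγ]
    conv_rhs => rw [Fin.sum_univ_succ, add_comm]
    simp only [Fin.comp_succ_succAbove, Fin.prod_univ_succ, Finset.smul_sum, smul_smul,
      curryLeft_apply_apply, Fin.succAbove_zero]
    simp [w]

end AlternatingMap

theorem sum_det_general {R : Type*} [CommRing R] (n : ℕ)
    (v : Fin (n + 1) → Fin n → R) (β γ : Fin n → R) :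
    Matrix.det (Matrix.of fun i j : Fin n => β i * v i.castSucc j + γ i * v i.succ j) =
      ∑ k : Fin (n + 1),
        (∏ i ∈ Finset.univ.filter fun i : Fin n => (i : ℕ) < (k : ℕ), β i) *
        (∏ j ∈ Finset.univ.filter fun j : Fin n => (k : ℕ) ≤ (j : ℕ), γ j) *
        Matrix.det (Matrix.of fun i j : Fin n => v (k.succAbove i) j) := by
  refine (Matrix.detRowAlternating.map_smul_add_smul_succ v β γ).trans
    (Finset.sum_congr rfl fun k _ => ?_)
  rw [Finset.prod_ite, smul_eq_mul]
  simp only [Fin.lt_def, Fin.val_castSucc, not_lt]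
  rfl

/-- **Determinant lemma.**  For `n+1` row vectors `v 0, …, v n` of length `n` over a
commutative ring and scalars `β 1, …, β n`, `γ 1, …, γ n` (indexed here by `Fin n`),
the determinant of the `n × n` matrix whose `i`-th row is `β i • v (i-1) + γ i • v i`
equals `∑ k, (∏_{i ≤ k} β i) (∏_{j > k} γ j) det (rows v 0, …, v (k-1), v (k+1), …, v n)`. -/
theorem sum_det {R : Type*} [CommRing R] (n : ℕ) (hn : 0 < n)
    (v : Fin (n + 1) → Fin n → R) (β γ : Fin n → R) :
    Matrix.det (Matrix.of fun i j : Fin n => β i * v i.castSucc j + γ i * v i.succ j) =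
      ∑ k : Fin (n + 1),
        (∏ i ∈ Finset.univ.filter fun i : Fin n => (i : ℕ) < (k : ℕ), β i) *
        (∏ j ∈ Finset.univ.filter fun j : Fin n => (k : ℕ) ≤ (j : ℕ), γ j) *
        Matrix.det (Matrix.of fun i j : Fin n => v (k.succAbove i) j) :=
  sum_det_general n v β γ
end

section
/- Let n be an even positive integer and let N_n be the n×n skew-symmetric matrix over the rationals whose (i,j)-entry for i < j is 1 if j - i is odd and 0 if j - i is even. Then the Pfaffian of N_n equals 2^{n/2 - 1}. -/
/-!
Generalize from the parity colouring to an arbitrary colouring `e : ℕ → Bool` of the indices: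
`colorMatrix R n e` has entry `±1` (the sign of `k - i`) at `(i, k)` when `i` and `k` have
different colours and `0` otherwise, and `N` is the case of the parity colouring. Deleting the
rows and columns `0` and `j + 1` of `colorMatrix` leaves the `colorMatrix` of the colouring with
those indices removed, so the first-row expansion is a recursion in the colouring alone. By
induction, `pf` is `2 ^ (n - 1)` if `e` alternates on `[0, 2n)` and `0` otherwise. If two
neighbours `a, a + 1` in `[1, 2n + 1]` share a colour, the minors only alternate when one of them is
deleted; both deletions give the same minor with opposite signs, so the expansion vanishes. If
`[1, 2n + 1]` alternates, only deleting an endpoint leaves an alternating minor, and these two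
terms agree, giving `2 · 2 ^ (n - 1)` exactly when `e 0 ≠ e 1`.
-/

/-- The Pfaffian of a `2n × 2n` matrix, defined by Laplace-type expansion along the
first row: `pf A = ∑ⱼ (-1)ʲ A 0 (j+1) pf (A with rows/columns 0 and j+1 deleted)`.
For skew-symmetric `A` this is the canonical polynomial with `pf A ^ 2 = det A`,
normalized so that the Pfaffian of the standard block matrix `[[0,1],[-1,0]]` is `1`. -/
def pf {R : Type*} [CommRing R] : (n : ℕ) → Matrix (Fin (2 * n)) (Fin (2 * n)) R → R
  | 0, _ => 1
  | (n + 1), A => ∑ j : Fin (2 * n + 1),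
      (-1 : R) ^ (j : ℕ) * A 0 j.succ *
        pf n (((A.submatrix Fin.succ Fin.succ)).submatrix j.succAbove j.succAbove)

def Alternates (e : ℕ → Bool) (n : ℕ) : Prop := ∀ k, k + 1 < n → e k ≠ e (k + 1)

def skip {α : Type*} (j : ℕ) (e : ℕ → α) : ℕ → α := fun k => if k < j then e k else e (k + 1)

def colorMatrix (R : Type*) [Ring R] (n : ℕ) (e : ℕ → Bool) : Matrix (Fin n) (Fin n) R :=
  Matrix.of fun i k => if e i = e k then 0 else if i < k then 1 else -1

section skip

variable {α : Type*} (e : ℕ → α)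

lemma skip_val_succAbove {n : ℕ} (j : Fin (n + 1)) (a : Fin n) :
    skip j e a = e (j.succAbove a) := by
  unfold skip Fin.succAbove
  split_ifs <;> simp_all [Fin.lt_def]
  omega

lemma skip_eq_skip_succ {a : ℕ} (h : e a = e (a + 1)) : skip a e = skip (a + 1) e := by
  funext k
  rcases eq_or_ne k a with rfl | hka
  · simp [skip, h]
  · simp only [skip]
    split_ifs <;> first | rfl | omega

end skip

lemma Bool.eq_of_ne_of_ne {a b c : Bool} (hab : a ≠ b) (hbc : b ≠ c) : a = c := by
  revert a b c; decide

namespace Alternates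

variable {e : ℕ → Bool} {n : ℕ}

lemma apply_two_mul (h : Alternates e n) {k : ℕ} (hk : 2 * k < n) : e (2 * k) = e 0 := by
  induction k with
  | zero => rfl
  | succ k ih =>
    rw [← ih (by omega)]
    exact (Bool.eq_of_ne_of_ne (h (2 * k) (by omega)) (h (2 * k + 1) (by omega))).symm

lemma skip_zero (h : Alternates e (n + 1)) : Alternates (skip 0 e) n :=
  fun k hk => h (k + 1) (by omega)

lemma skip_self (h : Alternates e (n + 1)) : Alternates (skip n e) n := by
  intro k hk
  simpa [skip, hk, show k < n by omega] using h k (by omega)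

lemma not_skip_of_pos_of_lt (h : Alternates e (n + 1)) {j : ℕ} (hj₀ : 0 < j) (hjn : j < n) :
    ¬ Alternates (skip j e) n := by
  obtain ⟨i, rfl⟩ : ∃ i, j = i + 1 := ⟨j - 1, by omega⟩
  intro hs
  apply hs i (by omega)
  simpa [skip] using Bool.eq_of_ne_of_ne (h i (by omega)) (h (i + 1) (by omega))

end Alternates

lemma not_alternates_skip_of_eq {e : ℕ → Bool} {n a j : ℕ} (h : e a = e (a + 1)) (ha : a < n)
    (hj : j ≤ n) (hja : j ≠ a) (hja' : j ≠ a + 1) : ¬ Alternates (skip j e) n := by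
  intro hs
  rcases lt_or_gt_of_ne hja with hlt | hgt
  · obtain ⟨i, rfl⟩ : ∃ i, a = i + 1 := ⟨a - 1, by omega⟩
    exact hs i (by omega) (by simpa [skip, show ¬ i < j by omega, show ¬ i + 1 < j by omega] using h)
  · exact hs a (by omega) (by simpa [skip, show a < j by omega, show a + 1 < j by omega] using h)

lemma alternates_succ_iff {e : ℕ → Bool} {n : ℕ} :
    Alternates e (n + 2) ↔ e 0 ≠ e 1 ∧ Alternates (skip 0 e) (n + 1) := by
  constructor
  · exact fun h => ⟨h 0 (by omega), fun k hk => h (k + 1) (by omega)⟩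
  · rintro ⟨h₀, h⟩ (_ | k) hk
    · exact h₀
    · exact h k (by omega)

section colorMatrix

variable {R : Type*} [CommRing R]

lemma colorMatrix_submatrix_succAbove (n : ℕ) (e : ℕ → Bool) (j : Fin (n + 1)) :
    (colorMatrix R (n + 1) e).submatrix j.succAbove j.succAbove = colorMatrix R n (skip j e) := by
  ext a b
  simp [colorMatrix, skip_val_succAbove, Fin.succAbove_lt_succAbove_iff]

lemma colorMatrix_zero_succ (n : ℕ) (e : ℕ → Bool) (j : Fin n) :
    colorMatrix R (n + 1) e 0 j.succ = if e 0 = e (j + 1) then 0 else 1 := by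
  simp [colorMatrix, Fin.succ_pos]

lemma pf_colorMatrix_succ (n : ℕ) (e : ℕ → Bool) :
    pf (n + 1) (colorMatrix R (2 * (n + 1)) e) = ∑ j : Fin (2 * n + 1),
      (-1) ^ (j : ℕ) * (if e 0 = e (j + 1) then 0 else 1) *
        pf n (colorMatrix R (2 * n) (skip j (skip 0 e))) := by
  have hrows : (colorMatrix R (2 * (n + 1)) e).submatrix Fin.succ Fin.succ
      = colorMatrix R (2 * n + 1) (skip 0 e) :=
    colorMatrix_submatrix_succAbove (2 * n + 1) e 0
  rw [pf, hrows]
  refine Finset.sum_congr rfl fun j _ => ?_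
  have hentry : colorMatrix R (2 * (n + 1)) e 0 j.succ = if e 0 = e (j + 1) then 0 else 1 :=
    colorMatrix_zero_succ (2 * n + 1) e j
  rw [colorMatrix_submatrix_succAbove, hentry]

end colorMatrix

section expansion

open scoped Classical

variable {R : Type*} [CommRing R]

lemma sum_expansion_of_alternates {n : ℕ} (hn : 0 < n) (c : Bool) {f : ℕ → Bool}
    (hf : Alternates f (2 * n + 1)) (x : R) :
    ∑ j : Fin (2 * n + 1), (-1) ^ (j : ℕ) * (if c = f j then 0 else 1) *
      (if Alternates (skip j f) (2 * n) then x else 0) = if c = f 0 then 0 else 2 * x := by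
  rw [Fintype.sum_eq_add 0 (Fin.last (2 * n)) (Fin.ne_of_val_ne (by simp only [Fin.val_zero, Fin.val_last]; omega))]
  · have hlast : f (2 * n) = f 0 := hf.apply_two_mul (by omega)
    simp only [Fin.val_zero, Fin.val_last, hlast, hf.skip_zero, hf.skip_self, if_true, pow_mul]
    by_cases hc : c = f 0 <;> simp [hc, two_mul]
  · rintro j ⟨hj₀, hjl⟩
    have hpos : 0 < (j : ℕ) := Nat.pos_of_ne_zero (Fin.val_ne_iff.2 hj₀)
    have hlt : (j : ℕ) < 2 * n := Fin.val_lt_last hjl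
    rw [if_neg (hf.not_skip_of_pos_of_lt hpos hlt), mul_zero]

lemma sum_expansion_of_not_alternates {n : ℕ} (c : Bool) {f : ℕ → Bool}
    (hf : ¬ Alternates f (2 * n + 1)) (x : R) :
    ∑ j : Fin (2 * n + 1), (-1) ^ (j : ℕ) * (if c = f j then 0 else 1) *
      (if Alternates (skip j f) (2 * n) then x else 0) = 0 := by
  obtain ⟨a, ha, hfa⟩ : ∃ a, a + 1 < 2 * n + 1 ∧ f a = f (a + 1) := by
    simpa [Alternates] using hf
  rw [Fintype.sum_eq_add ⟨a, by omega⟩ ⟨a + 1, ha⟩ (by simp [Fin.ext_iff])]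
  · simp only [skip_eq_skip_succ f hfa, ← hfa, pow_succ]
    ring
  · rintro j ⟨hja, hja'⟩
    rw [if_neg (not_alternates_skip_of_eq hfa (by omega) j.is_le (fun h => hja (Fin.ext h))
      (fun h => hja' (Fin.ext h))), mul_zero]

theorem pf_colorMatrix {R : Type*} [CommRing R] (n : ℕ) (e : ℕ → Bool) :
    pf n (colorMatrix R (2 * n) e) = if Alternates e (2 * n) then 2 ^ (n - 1) else 0 := by
  induction n generalizing e with
  | zero => simp [pf, Alternates]
  | succ n ih =>
    simp only [pf_colorMatrix_succ, ih, show 2 * (n + 1) = 2 * n + 2 by ring, alternates_succ_iff]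
    by_cases hf : Alternates (skip 0 e) (2 * n + 1)
    · rcases Nat.eq_zero_or_pos n with rfl | hn
      · simp [Alternates, skip]
      · refine (sum_expansion_of_alternates hn (e 0) hf _).trans ?_
        simp [hf, skip, ← pow_succ', Nat.sub_add_cancel hn]
    · refine (sum_expansion_of_not_alternates (e 0) hf _).trans ?_
      simp [hf]

end expansion

theorem pf_N_general (m : ℕ) :
    pf m (Matrix.of fun i j : Fin (2 * m) =>
      if (i : ℕ) < (j : ℕ) then (if ((j : ℕ) - (i : ℕ)) % 2 = 1 then (1 : ℚ) else 0)
      else if (j : ℕ) < (i : ℕ) then (if ((i : ℕ) - (j : ℕ)) % 2 = 1 then -1 else 0)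
      else 0) = 2 ^ (m - 1) := by
  have hN : (Matrix.of fun i j : Fin (2 * m) =>
      if (i : ℕ) < (j : ℕ) then (if ((j : ℕ) - (i : ℕ)) % 2 = 1 then (1 : ℚ) else 0)
      else if (j : ℕ) < (i : ℕ) then (if ((i : ℕ) - (j : ℕ)) % 2 = 1 then -1 else 0)
      else 0) = colorMatrix ℚ (2 * m) (fun k => decide (k % 2 = 1)) := by
    ext i j
    simp only [colorMatrix, Matrix.of_apply, decide_eq_decide, Fin.lt_def]
    split_ifs <;> first | rfl | omega
  have hparity : Alternates (fun k => decide (k % 2 = 1)) (2 * m) := fun k _ => by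
    simp only [ne_eq, decide_eq_decide]
    omega
  rw [hN, pf_colorMatrix, if_pos hparity]

/-- The Pfaffian of the `n × n` (with `n = 2m` even) skew-symmetric matrix whose
`(i,j)`-entry for `i < j` is `1` if `j - i` is odd and `0` if `j - i` is even,
equals `2 ^ (n/2 - 1)`. -/
theorem pf_N (m : ℕ) (hm : 1 ≤ m) :
    pf m (Matrix.of fun i j : Fin (2 * m) =>
      if (i : ℕ) < (j : ℕ) then (if ((j : ℕ) - (i : ℕ)) % 2 = 1 then (1 : ℚ) else 0)
      else if (j : ℕ) < (i : ℕ) then (if ((i : ℕ) - (j : ℕ)) % 2 = 1 then -1 else 0)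
      else 0) = 2 ^ (m - 1) :=
  pf_N_general m
end

section
/- Let n be an even positive integer, u_1, ..., u_n indeterminates, and ε = (ε_1, ..., ε_n) ∈ {1, -1}^n. Let M^ε(u) be the n×n skew-symmetric matrix whose (i,j)-entry for i < j is 1 + u_i u_j if ε_i ε_j = (-1)^{i+j+1}, and u_i + u_j if ε_i ε_j = (-1)^{i+j}. Then pf(M^ε(u)) = 2^{n/2 - 1} ( ∏_{i : ε_i = 1} u_i + ∏_{i : ε_i = -1} u_i ). -/
section Splice

variable {α : Type*}

def alternate {n : ℕ} (a b : Fin n → α) (i : Fin n) : α := if Even (i : ℕ) then a i else b i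

def splice {n : ℕ} (x y : Fin n → α) (j : ℕ) (i : Fin n) : α := if (i : ℕ) ≤ j then x i else y i

@[simp] theorem alternate_zero {n : ℕ} (a b : Fin (n + 1) → α) : alternate a b 0 = a 0 :=
  if_pos (by simp)

theorem val_succ_succAbove {n : ℕ} (j : Fin (n + 1)) (k : Fin n) :
    ((j.succAbove k).succ : ℕ) = if (k : ℕ) < j then (k : ℕ) + 1 else (k : ℕ) + 2 := by
  rcases lt_or_ge (k : ℕ) j with h | h
  · rw [Fin.succAbove_of_castSucc_lt _ _ (Fin.lt_def.2 h), if_pos h]; simp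
  · rw [Fin.succAbove_of_le_castSucc _ _ (Fin.le_def.2 h), if_neg h.not_gt]; simp

/- Deleting positions `0` and `j + 1` moves the positions below `j + 1` down by one, which
flips their parity, and the positions above it down by two. -/
theorem alternate_succAbove_succ {n : ℕ} (a b : Fin (n + 2) → α) (j : Fin (n + 1)) (k : Fin n) :
    alternate (fun k => a (j.succAbove k).succ) (fun k => b (j.succAbove k).succ) k =
      splice (alternate b a) (alternate a b) j (j.succAbove k).succ := by
  simp only [alternate, splice, val_succ_succAbove]
  rcases lt_or_ge (k : ℕ) j with h | h
  · rw [if_pos h, if_pos (by omega : (k : ℕ) + 1 ≤ j)]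
    simp only [Nat.even_add_one, ite_not]
  · rw [if_neg h.not_gt, if_neg (by omega : ¬ (k : ℕ) + 2 ≤ j)]
    simp [Nat.even_add_one]

theorem splice_add_one_succAbove_succ {n : ℕ} (x y : Fin (n + 2) → α) (j : Fin (n + 1))
    (k : Fin n) :
    splice x y ((j : ℕ) + 1) (j.succAbove k).succ = splice x y j (j.succAbove k).succ := by
  have hne : ((j.succAbove k : Fin (n + 1)) : ℕ) ≠ j := Fin.val_ne_of_ne (j.succAbove_ne k)
  simp only [splice, Fin.val_succ]
  congr 1
  simp only [eq_iff_iff]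
  omega

variable [CommMonoid α]

def spliceProd {n : ℕ} (x y : Fin (n + 1) → α) (j : ℕ) : α := ∏ i : Fin n, splice x y j i.succ

theorem spliceProd_eq {n : ℕ} (x y : Fin (n + 2) → α) (j : Fin (n + 1)) :
    spliceProd x y j = y j.succ * ∏ k : Fin n, splice x y j (j.succAbove k).succ := by
  rw [spliceProd, Fin.prod_univ_succAbove _ j]
  simp [splice]

theorem spliceProd_add_one_eq {n : ℕ} (x y : Fin (n + 2) → α) (j : Fin (n + 1)) :
    spliceProd x y ((j : ℕ) + 1) = x j.succ * ∏ k : Fin n, splice x y j (j.succAbove k).succ := by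
  rw [spliceProd, Fin.prod_univ_succAbove _ j]
  simp only [splice_add_one_succAbove_succ]
  simp [splice]

theorem mul_spliceProd_zero {n : ℕ} (x y : Fin (n + 1) → α) :
    y 0 * spliceProd x y 0 = ∏ i, y i := by
  simp [spliceProd, splice, Fin.prod_univ_succ]

theorem mul_spliceProd_of_le {n : ℕ} (x y : Fin (n + 1) → α) {j : ℕ} (hj : n ≤ j) :
    x 0 * spliceProd x y j = ∏ i, x i := by
  rw [spliceProd, Fin.prod_univ_succ]
  congr 1
  refine Finset.prod_congr rfl fun i _ => ?_
  simp [splice, (by omega : (i : ℕ) + 1 ≤ j)]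

end Splice

section PairMatrix

variable {R : Type*} [CommRing R]

def skewOfUpper {ι : Type*} [LinearOrder ι] (f : ι → ι → R) : Matrix ι ι R :=
  Matrix.of fun i j => if i < j then f i j else if j < i then -f j i else 0

theorem submatrix_skewOfUpper {ι κ : Type*} [LinearOrder ι] [LinearOrder κ] (f : ι → ι → R)
    {e : κ → ι} (he : StrictMono e) :
    (skewOfUpper f).submatrix e e = skewOfUpper fun k l => f (e k) (e l) := by
  ext k l
  simp only [skewOfUpper, Matrix.submatrix_apply, Matrix.of_apply, he.lt_iff_lt]

theorem pf_succ_skewOfUpper (n : ℕ) (f : Fin (2 * n + 2) → Fin (2 * n + 2) → R) :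
    pf (n + 1) (skewOfUpper f) = ∑ j : Fin (2 * n + 1),
      (-1) ^ (j : ℕ) * f 0 j.succ *
        pf n (skewOfUpper fun k l => f (j.succAbove k).succ (j.succAbove l).succ) := by
  rw [pf]
  refine Finset.sum_congr rfl fun j _ => ?_
  rw [Matrix.submatrix_submatrix,
    submatrix_skewOfUpper _ (Fin.strictMono_succ.comp (Fin.strictMono_succAbove j))]
  simp [skewOfUpper, Fin.succ_pos]

def pairMatrix {ι : Type*} [LinearOrder ι] (a b : ι → R) : Matrix ι ι R :=
  skewOfUpper fun i j => a i * b j + a j * b i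

theorem pf_succ_pairMatrix (n : ℕ) (a b : Fin (2 * n + 2) → R) :
    pf (n + 1) (pairMatrix a b) = ∑ j : Fin (2 * n + 1),
      (-1) ^ (j : ℕ) * (a 0 * b j.succ + a j.succ * b 0) *
        pf n (pairMatrix (fun k => a (j.succAbove k).succ) fun k => b (j.succAbove k).succ) :=
  pf_succ_skewOfUpper n _

/-- The potential `V` that telescopes the first-row expansion of `pf (pairMatrix a b)`,
see `firstRow_term_eq_pairPotential_sub`. -/
def pairPotential {n : ℕ} (a b : Fin (n + 2) → R) (j : ℕ) : R :=
  if Even j then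
    a 0 * spliceProd (alternate b a) (alternate a b) j +
      b 0 * spliceProd (alternate a b) (alternate b a) j
  else
    -(a 0 * spliceProd (alternate a b) (alternate b a) j +
      b 0 * spliceProd (alternate b a) (alternate a b) j)

theorem pairPotential_zero {n : ℕ} (a b : Fin (n + 2) → R) :
    pairPotential a b 0 = ∏ i, alternate a b i + ∏ i, alternate b a i := by
  rw [pairPotential, if_pos (by decide), ← alternate_zero a b, ← alternate_zero b a,
    mul_spliceProd_zero, mul_spliceProd_zero]

theorem pairPotential_of_le {n : ℕ} (a b : Fin (n + 2) → R) {j : ℕ} (hj : n + 1 ≤ j)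
    (hodd : Odd j) : pairPotential a b j = -(∏ i, alternate a b i + ∏ i, alternate b a i) := by
  rw [pairPotential, if_neg (Nat.not_even_iff_odd.2 hodd), ← alternate_zero a b,
    ← alternate_zero b a, mul_spliceProd_of_le _ _ hj, mul_spliceProd_of_le _ _ hj]

theorem firstRow_term_eq_pairPotential_sub {n : ℕ} (a b : Fin (n + 2) → R) (j : Fin (n + 1)) :
    (-1) ^ (j : ℕ) * (a 0 * b j.succ + a j.succ * b 0) *
      (∏ k, alternate (fun k => a (j.succAbove k).succ) (fun k => b (j.succAbove k).succ) k +
        ∏ k, alternate (fun k => b (j.succAbove k).succ) (fun k => a (j.succAbove k).succ) k) =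
      pairPotential a b j - pairPotential a b (j + 1) := by
  simp only [alternate_succAbove_succ, pairPotential, spliceProd_eq, spliceProd_add_one_eq]
  rcases Nat.even_or_odd (j : ℕ) with hj | hj
  · simp only [hj.neg_one_pow, hj, alternate, Fin.val_succ, Nat.even_add_one, not_true_eq_false,
      ↓reduceIte]
    ring
  · simp only [hj.neg_one_pow, ← Nat.not_odd_iff_even, hj, alternate, Fin.val_succ, Odd.add_one,
      not_true_eq_false, ↓reduceIte]
    ring

theorem pf_pairMatrix (m : ℕ) (a b : Fin (2 * m + 2) → R) :
    pf (m + 1) (pairMatrix a b) = 2 ^ m * (∏ i, alternate a b i + ∏ i, alternate b a i) := by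
  induction m with
  | zero =>
    rw [pf_succ_pairMatrix]
    simp [pf, alternate, Fin.prod_univ_two, mul_comm (a 1)]
  | succ m ih =>
    -- the minors produced by `pf_succ_pairMatrix` are indexed by `Fin (2 * (m + 1))`
    have ih' : ∀ a b : Fin (2 * (m + 1)) → R, pf (m + 1) (pairMatrix a b) =
        2 ^ m * (∏ i, alternate a b i + ∏ i, alternate b a i) := ih
    rw [pf_succ_pairMatrix]
    simp only [ih', mul_left_comm _ ((2 : R) ^ m), ← Finset.mul_sum,
      firstRow_term_eq_pairPotential_sub]
    rw [Fin.sum_univ_eq_sum_range (fun j => pairPotential a b j - pairPotential a b (j + 1)),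
      Finset.sum_range_sub', pairPotential_zero, pairPotential_of_le a b le_rfl ⟨m + 1, by ring⟩]
    ring

end PairMatrix

theorem mul_eq_neg_one_pow_add_add_one_iff {s t : ℤ} (hs : s = 1 ∨ s = -1) (ht : t = 1 ∨ t = -1)
    (k l : ℕ) : s * t = (-1) ^ (k + l + 1) ↔ ¬(s = (-1) ^ k ↔ t = (-1) ^ l) := by
  rw [pow_succ, pow_add]
  rcases neg_one_pow_eq_or ℤ k with hk | hk <;> rcases neg_one_pow_eq_or ℤ l with hl | hl <;>
    rcases hs with rfl | rfl <;> rcases ht with rfl | rfl <;> norm_num [hk, hl]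

theorem ite_mul_ite_add_ite_mul_ite {R : Type*} [CommRing R] (p q : Prop) [Decidable p]
    [Decidable q] (x y : R) :
    (if p then x else 1) * (if q then 1 else y) + (if q then y else 1) * (if p then 1 else x) =
      if (p ↔ q) then x + y else 1 + x * y := by
  by_cases hp : p <;> by_cases hq : q <;>
    simp only [hp, hq, ↓reduceIte, mul_one, one_mul, iff_self, iff_true, iff_false,
      not_true_eq_false] <;> ring

open MvPolynomial in
/-- For `n = 2m` even, signs `ε ∈ {1,-1}ⁿ` and indeterminates `u_i = X i`, the
Pfaffian of the skew-symmetric matrix `M^ε(u)` whose `(i,j)`-entry for `i < j` is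
`1 + u_i u_j` when `ε_i ε_j = (-1)^{i+j+1}` and `u_i + u_j` when `ε_i ε_j = (-1)^{i+j}`
equals `2^{m-1} (∏_{ε_i = 1} u_i + ∏_{ε_i = -1} u_i)`.
(Indices here are `0`-based, so `(-1)^{i+j+1}` for `1`-based indices is
`(-1)^{(i+1)+(j+1)+1} = (-1)^{i+j+1}` — unchanged.) -/
theorem pf_M (m : ℕ) (hm : 1 ≤ m) (ε : Fin (2 * m) → ℤ)
    (hε : ∀ i, ε i = 1 ∨ ε i = -1) :
    pf m (Matrix.of fun i j : Fin (2 * m) =>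
      if (i : ℕ) < (j : ℕ) then
        (if ε i * ε j = (-1) ^ ((i : ℕ) + (j : ℕ) + 1) then
          1 + X i * X j else X i + X j : MvPolynomial (Fin (2 * m)) ℚ)
      else if (j : ℕ) < (i : ℕ) then
        -(if ε j * ε i = (-1) ^ ((j : ℕ) + (i : ℕ) + 1) then
          1 + X j * X i else X j + X i)
      else 0) =
      2 ^ (m - 1) *
        ((∏ i ∈ Finset.univ.filter fun i => ε i = 1, X i) +
          (∏ i ∈ Finset.univ.filter fun i => ε i = -1, X i)) := by
  obtain ⟨m, rfl⟩ : ∃ k, m = k + 1 := ⟨m - 1, by omega⟩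
  set a : Fin (2 * (m + 1)) → MvPolynomial (Fin (2 * (m + 1))) ℚ :=
    fun i => if ε i = (-1) ^ (i : ℕ) then X i else 1
  set b : Fin (2 * (m + 1)) → MvPolynomial (Fin (2 * (m + 1))) ℚ :=
    fun i => if ε i = (-1) ^ (i : ℕ) then 1 else X i
  have hentry : ∀ i j : Fin (2 * (m + 1)),
      (if ε i * ε j = (-1) ^ ((i : ℕ) + (j : ℕ) + 1) then 1 + X i * X j else X i + X j) =
        a i * b j + a j * b i := by
    intro i j
    simp only [mul_eq_neg_one_pow_add_add_one_iff (hε i) (hε j), a, b,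
      ite_mul_ite_add_ite_mul_ite, ite_not]
  have halt : ∀ i, alternate a b i = if ε i = 1 then X i else 1 := by
    intro i
    rcases Nat.even_or_odd (i : ℕ) with hi | hi <;> rcases hε i with h | h <;>
      simp [alternate, a, b, hi, h, hi.neg_one_pow, ← Nat.not_odd_iff_even]
  have halt' : ∀ i, alternate b a i = if ε i = -1 then X i else 1 := by
    intro i
    rcases Nat.even_or_odd (i : ℕ) with hi | hi <;> rcases hε i with h | h <;>
      simp [alternate, a, b, hi, h, hi.neg_one_pow, ← Nat.not_odd_iff_even]
  simp only [hentry, Finset.prod_filter, ← halt, ← halt']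
  exact pf_pairMatrix m a b
end

section
/- Let p_1^⊥ denote the skewing operator on symmetric functions adjoint to multiplication by the first power sum p_1 with respect to the Hall inner product, and for r ∈ ℤ let f_r = ∑_{n ∈ ℤ} e_n e_{n+r} where e_n is the n-th elementary symmetric function (e_n = 0 for n < 0). Then for all integers i and all j ≥ 0, (p_1^⊥)^j f_i = ∑_{r=0}^{j} binom(j, r) f_{i - j + 2r}. -/
/-!
We model the completed ring of symmetric functions `Λ̂` over `ℚ` as the ring of
formal power series in the power-sum generators: `MvPowerSeries ℕ ℚ`, where the
variable `X n` represents the power sum `p (n+1)`.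
-/

/-- The symmetric-function weight of a monomial in the power sums:
the variable `X i` (representing `p (i+1)`) has degree `i + 1`. -/
def psWeight (d : ℕ →₀ ℕ) : ℕ := d.sum fun i m => (i + 1) * m

/-- The elementary symmetric functions, defined via Newton's identities
`(n+1) e_{n+1} = ∑_{k=1}^{n+1} (-1)^{k-1} e_{n+1-k} p_k`, expressed in the
power-sum model of the ring of symmetric functions. -/
noncomputable def esym : ℕ → MvPowerSeries ℕ ℚ
  | 0 => 1
  | (n + 1) => (((n : ℚ) + 1)⁻¹) •
      ∑ j ∈ Finset.range (n + 1),
        ((-1 : MvPowerSeries ℕ ℚ)) ^ j * esym (n - j) * MvPowerSeries.X j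
  decreasing_by exact Nat.lt_succ_of_le (Nat.sub_le n j)

/-- `esymZ k = e_k`, extended by `0` to negative indices. -/
noncomputable def esymZ (k : ℤ) : MvPowerSeries ℕ ℚ :=
  if 0 ≤ k then esym k.toNat else 0

/-- `fSym r = ∑_{n ∈ ℤ} e_n e_{n+r}`, defined coefficientwise (for each monomial
only finitely many summands contribute, by homogeneity). -/
noncomputable def fSym (r : ℤ) : MvPowerSeries ℕ ℚ :=
  fun d => ∑ n ∈ Finset.range (psWeight d + 1),
    MvPowerSeries.coeff d (esymZ n * esymZ (n + r))

/-- The skewing operator `p₁^⊥`, the adjoint of multiplication by `p₁` with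
respect to the Hall inner product; equivalently the derivation `∂/∂p₁` in the
power-sum model, here defined coefficientwise. -/
noncomputable def pperp (F : MvPowerSeries ℕ ℚ) : MvPowerSeries ℕ ℚ :=
  fun d => ((d 0 : ℚ) + 1) * MvPowerSeries.coeff (d + Finsupp.single 0 1) F


/-!
In the power-sum model `p₁^⊥` is the derivation `∂/∂p₁`. Differentiating Newton's identities
gives `∂ e_n = e_{n-1}`, so by the Leibniz rule `∂ (e_n e_{n+r}) = e_{n-1} e_{n+r} + e_n e_{n+r-1}`;
summing over `n` and shifting the index in the first sum yields `p₁^⊥ f_r = f_{r-1} + f_{r+1}`.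
Iterating this relation produces the binomial coefficients exactly as in Pascal's triangle.
-/

open MvPowerSeries Finset

theorem pperp_eq_pderiv : pperp = pderiv ℚ 0 := by
  funext F
  ext d
  rw [coeff_pderiv, mul_comm]
  rfl

theorem iterate_apply_eq_sum_choose_nsmul {M F : Type*} [AddCommMonoid M] [FunLike F M M]
    [AddHomClass F M M] (T : F) (g : ℤ → M) (hT : ∀ k, T (g k) = g (k - 1) + g (k + 1))
    (i : ℤ) (j : ℕ) :
    T^[j] (g i) = ∑ r ∈ range (j + 1), j.choose r • g (i - j + 2 * r) := by
  induction j generalizing i with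
  | zero => simp
  | succ j ih =>
    rw [Function.iterate_succ_apply, hT, iterate_map_add, ih, ih,
      sum_choose_succ_nsmul (fun r _ => g (i - (j + 1 : ℕ) + 2 * r)) j]
    congr 1 <;> refine sum_congr rfl fun r _ => ?_ <;> congr 2 <;> push_cast <;> ring

theorem psWeight_eq_weight (d : ℕ →₀ ℕ) : psWeight d = Finsupp.weight (· + 1) d := by
  rw [Finsupp.weight_apply, psWeight]
  exact Finsupp.sum_congr fun i _ => by rw [smul_eq_mul, mul_comm]

namespace MvPowerSeries

variable {σ R : Type*} [Semiring R] (w : σ → ℕ)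

theorem le_weightedOrder_sum {ι : Type*} (s : Finset ι) (f : ι → MvPowerSeries σ R) {n : ℕ∞}
    (h : ∀ i ∈ s, n ≤ (f i).weightedOrder w) : n ≤ (∑ i ∈ s, f i).weightedOrder w :=
  le_weightedOrder w fun d hd => by
    rw [map_sum]
    exact sum_eq_zero fun i hi => coeff_eq_zero_of_lt_weightedOrder w (hd.trans_le (h i hi))

theorem weightedOrder_X [Nontrivial R] (i : σ) :
    (X i : MvPowerSeries σ R).weightedOrder w = w i := by
  rw [X, weightedOrder_monomial_of_ne_zero w one_ne_zero, Finsupp.weight_single, one_smul]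

end MvPowerSeries

theorem le_weightedOrder_esym (n : ℕ) : (n : ℕ∞) ≤ (esym n).weightedOrder (· + 1) := by
  induction n using Nat.strong_induction_on with
  | _ n ih =>
    match n with
    | 0 => exact zero_le
    | n + 1 =>
      rw [esym]
      refine (le_weightedOrder_sum _ _ _ fun j hj => ?_).trans (le_weightedOrder_smul _)
      have hjn : j ≤ n := Nat.lt_succ_iff.mp (mem_range.mp hj)
      calc ((n + 1 : ℕ) : ℕ∞) = 0 + (n - j : ℕ) + (j + 1 : ℕ) := by
            rw [zero_add, ← Nat.cast_add]; congr 1; omega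
        _ ≤ ((-1 : MvPowerSeries ℕ ℚ) ^ j).weightedOrder _ + (esym (n - j)).weightedOrder _
              + (X j).weightedOrder (· + 1) := by
            rw [weightedOrder_X]
            gcongr
            · exact zero_le
            · exact ih _ (by omega)
        _ ≤ _ := (add_le_add_left (le_weightedOrder_mul _) _).trans (le_weightedOrder_mul _)

theorem esymZ_of_neg {k : ℤ} (hk : k < 0) : esymZ k = 0 := if_neg (by omega)

theorem coeff_esymZ_mul_of_psWeight_lt {d : ℕ →₀ ℕ} {k : ℤ} (Q : MvPowerSeries ℕ ℚ)
    (h : (psWeight d : ℤ) < k) : coeff d (esymZ k * Q) = 0 := by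
  obtain ⟨n, rfl⟩ := Int.eq_ofNat_of_zero_le (by omega : 0 ≤ k)
  rw [esymZ, if_pos (by omega), Int.toNat_natCast]
  refine coeff_eq_zero_of_lt_weightedOrder (· + 1) ?_
  rw [← psWeight_eq_weight]
  calc ((psWeight d : ℕ) : ℕ∞) < n := by exact_mod_cast h
    _ ≤ (esym n).weightedOrder _ := le_weightedOrder_esym n
    _ ≤ (esym n).weightedOrder _ + Q.weightedOrder _ := le_self_add
    _ ≤ _ := le_weightedOrder_mul _

theorem coeff_fSym_eq_sum_Ico (r : ℤ) (d : ℕ →₀ ℕ) {a b : ℤ} (ha : a ≤ 0)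
    (hb : (psWeight d : ℤ) < b) :
    coeff d (fSym r) = ∑ n ∈ Ico a b, coeff d (esymZ n * esymZ (n + r)) := by
  have hrange : coeff d (fSym r)
      = ∑ n ∈ Ico (0 : ℤ) (psWeight d + 1), coeff d (esymZ n * esymZ (n + r)) := by
    rw [Int.Ico_eq_finset_map, sum_map]
    simp only [sub_zero, Int.toNat_natCast_add_one, Function.Embedding.trans_apply,
      Nat.castEmbedding_apply, addLeftEmbedding_apply, zero_add]
    rfl
  rw [hrange]
  refine sum_subset (Ico_subset_Ico ha (by omega)) fun n _ hn => ?_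
  rcases lt_or_ge n 0 with hneg | hnn
  · rw [esymZ_of_neg hneg, zero_mul, map_zero]
  · exact coeff_esymZ_mul_of_psWeight_lt _ (by simp only [mem_Ico] at hn; omega)

theorem natCast_smul_esym (n : ℕ) :
    (n : ℚ) • esym n = ∑ j ∈ range n, (-1) ^ j * esym (n - 1 - j) * X j := by
  cases n with
  | zero => simp
  | succ n =>
    rw [esym, smul_smul, Nat.cast_succ, mul_inv_cancel₀ (by positivity), one_smul,
      Nat.add_sub_cancel]

theorem pderiv_neg_one_pow_mul (j : ℕ) (f : MvPowerSeries ℕ ℚ) :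
    pderiv ℚ 0 ((-1) ^ j * f) = (-1) ^ j * pderiv ℚ 0 f := by
  have h : ((-1) ^ j : MvPowerSeries ℕ ℚ) = algebraMap ℚ _ ((-1) ^ j) := by simp
  rw [h, Derivation.leibniz, Derivation.map_algebraMap, smul_zero, add_zero, smul_eq_mul]

/-- Differentiating Newton's identity `(n+1) e_{n+1} = ∑ (-1)^j e_{n-j} p_{j+1}`, the factor `p₁`
contributes `e_n`, and by induction the remaining terms form Newton's identity for `n e_n`. -/
theorem pderiv_esym_succ (n : ℕ) : pderiv ℚ 0 (esym (n + 1)) = esym n := by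
  induction n using Nat.strong_induction_on with
  | _ n ih =>
    have hX : ∑ j ∈ range (n + 1), ((-1) ^ j * esym (n - j)) • pderiv ℚ 0 (X j) = esym n := by
      rw [sum_eq_single 0 (fun j _ hj => by rw [pderiv_X_of_ne hj, smul_zero]) (by simp)]
      simp
    have he : ∑ j ∈ range (n + 1), (X j : MvPowerSeries ℕ ℚ) • pderiv ℚ 0 ((-1) ^ j * esym (n - j))
        = (n : ℚ) • esym n := by
      simp_rw [pderiv_neg_one_pow_mul]
      rw [natCast_smul_esym, sum_range_succ, Nat.sub_self, esym, Derivation.map_one_eq_zero,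
        mul_zero, smul_zero, add_zero]
      refine sum_congr rfl fun j hj => ?_
      have hj : n - j = n - 1 - j + 1 := by have := mem_range.mp hj; omega
      rw [hj, ih _ (by omega), smul_eq_mul]
      ring
    have hsum : pderiv ℚ 0 (((n + 1 : ℕ) : ℚ) • esym (n + 1)) = ((n + 1 : ℕ) : ℚ) • esym n := by
      rw [natCast_smul_esym, Nat.add_sub_cancel, map_sum,
        sum_congr rfl fun j _ => Derivation.leibniz _ _ _, sum_add_distrib, hX, he,
        Nat.cast_succ, add_smul, one_smul, add_comm]
    rw [Derivation.map_smul] at hsum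
    exact smul_right_injective _ (by positivity) hsum

theorem pderiv_esymZ (k : ℤ) : pderiv ℚ 0 (esymZ k) = esymZ (k - 1) := by
  rcases lt_trichotomy k 0 with hk | rfl | hk
  · rw [esymZ_of_neg hk, esymZ_of_neg (by omega), map_zero]
  · rw [esymZ_of_neg (by omega : (0 : ℤ) - 1 < 0), esymZ, if_pos le_rfl, Int.toNat_zero, esym,
      Derivation.map_one_eq_zero]
  · obtain ⟨n, rfl⟩ : ∃ n : ℕ, k = n + 1 := ⟨(k - 1).toNat, by omega⟩
    rw [esymZ, esymZ, if_pos (by omega), if_pos (by omega), add_sub_cancel_right,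
      Int.toNat_natCast, Int.toNat_natCast_add_one, pderiv_esym_succ]

theorem pderiv_fSym (r : ℤ) : pderiv ℚ 0 (fSym r) = fSym (r - 1) + fSym (r + 1) := by
  ext d
  have hW : psWeight (d + Finsupp.single 0 1) = psWeight d + 1 := by
    rw [psWeight_eq_weight, psWeight_eq_weight, map_add, Finsupp.weight_single, one_smul]
  have hleibniz : ∀ n, coeff (d + Finsupp.single 0 1) (esymZ n * esymZ (n + r)) * (d 0 + 1)
      = coeff d (esymZ n * esymZ (n + (r - 1)))
        + coeff d (esymZ (n - 1) * esymZ (n - 1 + (r + 1))) := by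
    intro n
    rw [← coeff_pderiv, Derivation.leibniz, pderiv_esymZ, pderiv_esymZ, smul_eq_mul, smul_eq_mul,
      map_add, mul_comm (esymZ (n + r))]
    ring_nf
  have hshift : ∑ n ∈ Ico (0 : ℤ) (psWeight d + 2),
      coeff d (esymZ (n - 1) * esymZ (n - 1 + (r + 1))) = coeff d (fSym (r + 1)) := by
    rw [coeff_fSym_eq_sum_Ico (r + 1) d (a := -1) (b := psWeight d + 1) (by norm_num) (by omega),
      ← sum_Ico_add_right_sub_eq (f := fun n => coeff d (esymZ n * esymZ (n + (r + 1)))) _ _ 1]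
    norm_num [add_assoc]
  rw [coeff_pderiv, coeff_fSym_eq_sum_Ico r _ le_rfl (b := psWeight d + 2) (by omega), sum_mul,
    sum_congr rfl fun n _ => hleibniz n, sum_add_distrib, hshift, map_add,
    coeff_fSym_eq_sum_Ico (r - 1) d le_rfl (b := psWeight d + 2) (by omega)]

/-- **Lemma (powers of the skewing operator on `f`).**
For all integers `i` and all `j ≥ 0`,
`(p₁^⊥)^j f_i = ∑_{r=0}^{j} (j choose r) f_{i-j+2r}`. -/
theorem pperp_pow_fSym (i : ℤ) (j : ℕ) :
    pperp^[j] (fSym i) =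
      ∑ r ∈ Finset.range (j + 1), (j.choose r : ℚ) • fSym (i - j + 2 * r) := by
  simp only [Nat.cast_smul_eq_nsmul]
  rw [pperp_eq_pderiv]
  exact iterate_apply_eq_sum_choose_nsmul _ fSym pderiv_fSym i j
end

section
/- For any even bound: the number of standard Young tableaux with n cells and at most 2 columns equals the number of lattice walks of length n on the nonnegative integers starting and ending at 0, with steps +1, -1, 0, where the 0 step may only be used at position 0. (This is the w = 1 case of the Eu–Fu–Hou–Hsu theorem; both sides equal the Motzkin-like count, in fact the central binomial-related Riordan dual.) -/
/-!
Recording the column of each entry `1, …, n` identifies standard Young tableaux with lattice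
(Yamanouchi) words: the tableau is rebuilt by putting the `k`-th occurrence of the letter `j` into
row `k` of column `j`, and at most two columns means that only the letters `0` and `1` occur.
A walk is encoded by the word with `0` for an up or flat step and `1` for a down step. Its height
never exceeds the surplus of `0`s over `1`s in the prefix read so far, so the word is a lattice
word; conversely a lattice word is decoded by reading it backwards from height `0`, a flat step
being taken exactly where a `0` would lead below `0`.
-/

/-- A standard Young tableau of size `n`: a filling of the cells of a Young
diagram with `n` cells by the entries `1, …, n`, each appearing exactly once,
strictly increasing along rows and columns (entries outside the diagram are `0`). -/
structure SYT (n : ℕ) where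
  shape : YoungDiagram
  entry : ℕ → ℕ → ℕ
  card_shape : shape.cells.card = n
  row_strict : ∀ i j1 j2 : ℕ, j1 < j2 → (i, j2) ∈ shape → entry i j1 < entry i j2
  col_strict : ∀ i1 i2 j : ℕ, i1 < i2 → (i2, j) ∈ shape → entry i1 j < entry i2 j
  zeros : ∀ i j : ℕ, (i, j) ∉ shape → entry i j = 0
  bij : ∀ m : ℕ, 1 ≤ m → m ≤ n → ∃! c : ℕ × ℕ, c ∈ shape ∧ entry c.1 c.2 = m

/-- The width of a standard Young tableau: the number of columns of its shape,
i.e. the length of its first row. -/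
def SYT.width {n : ℕ} (T : SYT n) : ℕ := T.shape.rowLen 0

open Finset

variable {n : ℕ}

lemma injective_of_le_imp_le {α β : Type*} [PartialOrder α] [Preorder β] {f : α → β}
    (h : ∀ a b, f a ≤ f b → a ≤ b) : Function.Injective f := fun a b hab =>
  le_antisymm (h a b hab.le) (h b a hab.ge)

def prefixCount (w : Fin n → ℕ) (j k : ℕ) : ℕ := #{q : Fin n | (q : ℕ) < k ∧ w q = j}

def IsLatticeWord (w : Fin n → ℕ) : Prop :=
  ∀ j, ∀ k ≤ n, prefixCount w (j + 1) k ≤ prefixCount w j k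

section PrefixCount

variable (w : Fin n → ℕ) (j : ℕ)

@[simp]
lemma prefixCount_zero : prefixCount w j 0 = 0 := by
  simp [prefixCount]

lemma prefixCount_succ (i : Fin n) :
    prefixCount w j (i + 1) = prefixCount w j i + if w i = j then 1 else 0 := by
  have hsplit : ({q : Fin n | (q : ℕ) < i + 1 ∧ w q = j} : Finset (Fin n)) =
      ({q : Fin n | (q : ℕ) < i ∧ w q = j} : Finset (Fin n)) ∪
        ({q : Fin n | q = i ∧ w q = j} : Finset (Fin n)) := by
    ext q
    simp only [mem_filter, mem_univ, true_and, mem_union, Nat.lt_succ_iff_lt_or_eq, Fin.val_inj]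
    tauto
  have hlast : #({q : Fin n | q = i ∧ w q = j} : Finset (Fin n)) = if w i = j then 1 else 0 := by
    split_ifs with h
    · exact card_eq_one.mpr ⟨i, by ext q; simpa using fun hq => hq ▸ h⟩
    · simp [h]
  rw [prefixCount, hsplit, card_union_of_disjoint (disjoint_filter.mpr fun q _ h h' => ?_), hlast]
  · rfl
  · exact h.1.ne (congrArg Fin.val h'.1)

lemma prefixCount_mono : Monotone (prefixCount w j) := fun _ _ hkl =>
  card_le_card fun q hq => by
    simp only [mem_filter, mem_univ, true_and] at hq ⊢
    exact ⟨by omega, hq.2⟩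

lemma exists_prefixCount_eq {i k : ℕ} (hk : k ≤ n) (hi : i < prefixCount w j k) :
    ∃ q : Fin n, w q = j ∧ prefixCount w j q = i := by
  induction k with
  | zero => simp at hi
  | succ k ih =>
    have hsucc : prefixCount w j (k + 1) = prefixCount w j k + if w ⟨k, hk⟩ = j then 1 else 0 :=
      prefixCount_succ w j ⟨k, hk⟩
    rcases lt_or_ge i (prefixCount w j k) with hlt | hge
    · exact ih (by omega) hlt
    · refine ⟨⟨k, hk⟩, ?_, show prefixCount w j k = i from ?_⟩ <;>
        split_ifs at hsucc <;> omega

end PrefixCount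

lemma IsLatticeWord.prefixCount_antitone {w : Fin n → ℕ} (hw : IsLatticeWord w) {k : ℕ}
    (hk : k ≤ n) : Antitone (prefixCount w · k) :=
  antitone_nat_of_succ_le fun j => hw j k hk

/-- Where the entry `p + 1` goes in the tableau of the lattice word `w`. -/
def wordCell (w : Fin n → ℕ) (p : Fin n) : ℕ × ℕ := (prefixCount w (w p) p, w p)

section WordCell

variable {w : Fin n → ℕ} (hw : IsLatticeWord w)
include hw

lemma le_of_wordCell_le {p q : Fin n} (hpq : wordCell w p ≤ wordCell w q) : p ≤ q := by
  obtain ⟨hrow, hcol⟩ := Prod.mk_le_mk.mp hpq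
  by_contra! hqp
  have := calc
    prefixCount w (w q) q < prefixCount w (w q) (q + 1) := by simp [prefixCount_succ]
    _ ≤ prefixCount w (w p) (q + 1) := hw.prefixCount_antitone (by omega) hcol
    _ ≤ prefixCount w (w p) p := prefixCount_mono w _ (Nat.succ_le_of_lt hqp)
  omega

lemma isLowerSet_range_wordCell : IsLowerSet (Set.range (wordCell w)) := by
  rintro _ ⟨i, j⟩ ⟨hi, hj⟩ ⟨p, rfl⟩
  obtain ⟨q, hq, hqi⟩ : ∃ q, w q = j ∧ prefixCount w j q = i := by
    refine exists_prefixCount_eq w j p.isLt ?_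
    calc i ≤ prefixCount w (w p) p := hi
      _ < prefixCount w (w p) (p + 1) := by simp [prefixCount_succ]
      _ ≤ prefixCount w j (p + 1) := hw.prefixCount_antitone p.isLt hj
  exact ⟨q, by simp [wordCell, hq, hqi]⟩

end WordCell

namespace SYT

variable (T : SYT n)

/-- The cell holding the entry `p + 1`. -/
noncomputable def cell (p : Fin n) : ℕ × ℕ :=
  (T.bij (p + 1) (Nat.le_add_left 1 p) p.isLt).exists.choose

lemma cell_mem (p : Fin n) : T.cell p ∈ T.shape :=
  (T.bij (p + 1) (Nat.le_add_left 1 p) p.isLt).exists.choose_spec.1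

lemma entry_cell (p : Fin n) : T.entry (T.cell p).1 (T.cell p).2 = p + 1 :=
  (T.bij (p + 1) (Nat.le_add_left 1 p) p.isLt).exists.choose_spec.2

lemma eq_cell_of_entry_eq {c : ℕ × ℕ} {p : Fin n} (hc : c ∈ T.shape)
    (h : T.entry c.1 c.2 = p + 1) : c = T.cell p :=
  (T.bij (p + 1) (Nat.le_add_left 1 p) p.isLt).unique ⟨hc, h⟩ ⟨T.cell_mem p, T.entry_cell p⟩

lemma cell_injective : Function.Injective T.cell := fun p q h => by
  have := T.entry_cell p
  rw [h, T.entry_cell q] at this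
  exact Fin.ext (by omega)

lemma image_cell : univ.image T.cell = T.shape.cells :=
  eq_of_subset_of_card_le (image_subset_iff.mpr fun p _ => T.cell_mem p)
    (by rw [T.card_shape, card_image_of_injective _ T.cell_injective, card_univ, Fintype.card_fin])

lemma exists_cell_eq {c : ℕ × ℕ} (hc : c ∈ T.shape) : ∃ p, T.cell p = c := by
  rw [← YoungDiagram.mem_cells, ← T.image_cell] at hc
  simpa using hc

lemma mem_of_le_cell {c : ℕ × ℕ} {p : Fin n} (h : c ≤ T.cell p) : c ∈ T.shape :=
  T.shape.isLowerSet h (T.cell_mem p)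

lemma entry_le_entry {a b : ℕ × ℕ} (hab : a ≤ b) (hb : b ∈ T.shape) :
    T.entry a.1 a.2 ≤ T.entry b.1 b.2 := by
  obtain ⟨hi, hj⟩ := Prod.mk_le_mk.mp hab
  have hrow : T.entry a.1 a.2 ≤ T.entry a.1 b.2 := by
    rcases hj.lt_or_eq with hlt | heq
    · exact (T.row_strict _ _ _ hlt (T.shape.up_left_mem hi le_rfl hb)).le
    · rw [heq]
  have hcol : T.entry a.1 b.2 ≤ T.entry b.1 b.2 := by
    rcases hi.lt_or_eq with hlt | heq
    · exact (T.col_strict _ _ _ hlt hb).le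
    · rw [heq]
  exact hrow.trans hcol

lemma le_of_cell_le {p q : Fin n} (h : T.cell p ≤ T.cell q) : p ≤ q := by
  have := T.entry_le_entry h (T.cell_mem q)
  rw [T.entry_cell, T.entry_cell] at this
  exact Fin.le_def.mpr (by omega)

lemma lt_of_cell_lt {p q : Fin n} (h : T.cell p < T.cell q) : p < q :=
  lt_of_le_of_ne (T.le_of_cell_le h.le) fun hpq => h.ne (congrArg T.cell hpq)

lemma ext_of_cell {T T' : SYT n} (h : T.cell = T'.cell) : T = T' := by
  have hshape : T.shape = T'.shape := YoungDiagram.ext (by rw [← image_cell, ← image_cell, h])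
  have hentry : T.entry = T'.entry := by
    funext i j
    by_cases hij : (i, j) ∈ T.shape
    · obtain ⟨p, hp⟩ := T.exists_cell_eq hij
      have h' : T'.cell p = (i, j) := h ▸ hp
      have e := T.entry_cell p
      have e' := T'.entry_cell p
      rw [hp] at e
      rw [h'] at e'
      rw [e, e']
    · rw [T.zeros i j hij, T'.zeros i j (hshape ▸ hij)]
  cases T
  cases T'
  cases hshape
  cases hentry
  rfl

noncomputable def colWord (p : Fin n) : ℕ := (T.cell p).2

lemma cell_fst_eq_prefixCount (p : Fin n) :
    (T.cell p).1 = prefixCount T.colWord (T.colWord p) p := by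
  symm
  rw [prefixCount, ← card_range (T.cell p).1]
  apply card_nbij (fun q => (T.cell q).1)
  · intro q hq
    simp only [mem_coe, mem_filter, mem_univ, true_and] at hq
    simp only [coe_range, Set.mem_Iio]
    by_contra! hle
    have : T.cell p ≤ T.cell q := Prod.le_def.mpr ⟨hle, hq.2.ge⟩
    exact absurd (T.le_of_cell_le this) (by rw [Fin.le_def]; omega)
  · intro q hq q' hq' hqq'
    simp only [mem_coe, mem_filter, mem_univ, true_and] at hq hq'
    exact T.cell_injective (Prod.ext hqq' (hq.2.trans hq'.2.symm))
  · intro i hi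
    simp only [coe_range, Set.mem_Iio] at hi
    have hle : (i, (T.cell p).2) ≤ T.cell p := Prod.le_def.mpr ⟨hi.le, le_rfl⟩
    obtain ⟨q, hq⟩ := T.exists_cell_eq (T.mem_of_le_cell hle)
    have hlt : q < p :=
      T.lt_of_cell_lt (hq ▸ lt_of_le_of_ne hle fun h => hi.ne (congrArg Prod.fst h))
    refine ⟨q, ?_, show (T.cell q).1 = i by rw [hq]⟩
    rw [mem_coe, mem_filter]
    exact ⟨mem_univ _, hlt, show (T.cell q).2 = (T.cell p).2 by rw [hq]⟩

lemma cell_eq_wordCell : T.cell = wordCell T.colWord := by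
  funext p
  rw [wordCell, ← T.cell_fst_eq_prefixCount]
  rfl

lemma exists_lt_cell_eq_left {q : Fin n} {j : ℕ} (hq : (T.cell q).2 = j + 1) :
    ∃ p < q, T.cell p = ((T.cell q).1, j) := by
  have hle : ((T.cell q).1, j) ≤ T.cell q := Prod.le_def.mpr ⟨le_rfl, by simp only; omega⟩
  obtain ⟨p, hp⟩ := T.exists_cell_eq (T.mem_of_le_cell hle)
  refine ⟨p, T.lt_of_cell_lt (hp ▸ lt_of_le_of_ne hle fun h => ?_), hp⟩
  have := congrArg Prod.snd h
  simp only at this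
  omega

/-- Matching each entry in column `j + 1` with the smaller entry to its left. -/
lemma isLatticeWord_colWord : IsLatticeWord T.colWord := by
  intro j k _
  apply card_le_card_of_forall_subsingleton (fun q p => T.cell p = ((T.cell q).1, j))
  · intro q hq
    simp only [mem_filter, mem_univ, true_and] at hq
    obtain ⟨p, hpq, hp⟩ := T.exists_lt_cell_eq_left hq.2
    refine ⟨p, ?_, hp⟩
    simp only [mem_filter, mem_univ, true_and]
    exact ⟨(Fin.lt_def.mp hpq).trans hq.1, by rw [colWord, hp]⟩
  · rintro p - q ⟨hq, hqp⟩ q' ⟨hq', hq'p⟩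
    exact T.cell_injective (Prod.ext (Prod.mk.inj (hqp.symm.trans hq'p)).1
      ((mem_filter.mp hq).2.2.trans (mem_filter.mp hq').2.2.symm))

lemma width_le_iff {m : ℕ} : T.width ≤ m ↔ ∀ p, T.colWord p < m := by
  constructor
  · intro hm p
    have h0 : (0, (T.cell p).2) ∈ T.shape :=
      T.mem_of_le_cell (Prod.le_def.mpr ⟨Nat.zero_le _, le_rfl⟩)
    exact lt_of_lt_of_le (YoungDiagram.mem_iff_lt_rowLen.mp h0) hm
  · intro h
    by_contra! hm
    obtain ⟨p, hp⟩ := T.exists_cell_eq (YoungDiagram.mem_iff_lt_rowLen.mpr hm)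
    have := h p
    simp [colWord, hp] at this

section OfCell

variable (c : Fin n → ℕ × ℕ) (hlower : IsLowerSet (Set.range c))
  (hc : ∀ p q, c p ≤ c q → p ≤ q)

open Classical in
noncomputable def entryOfCell (i j : ℕ) : ℕ :=
  if h : (i, j) ∈ Set.range c then h.choose + 1 else 0

include hc in
lemma entryOfCell_apply (p : Fin n) : entryOfCell c (c p).1 (c p).2 = p + 1 := by
  have h : ((c p).1, (c p).2) ∈ Set.range c := ⟨p, rfl⟩
  rw [entryOfCell, dif_pos h, injective_of_le_imp_le hc h.choose_spec]

include hlower hc in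
lemma entryOfCell_lt {a b : ℕ × ℕ} (hab : a < b) (hb : b ∈ Set.range c) :
    entryOfCell c a.1 a.2 < entryOfCell c b.1 b.2 := by
  obtain ⟨q, rfl⟩ := hb
  obtain ⟨p, rfl⟩ := hlower hab.le ⟨q, rfl⟩
  rw [entryOfCell_apply c hc, entryOfCell_apply c hc]
  have hpq : p < q := lt_of_le_of_ne (hc p q hab.le) fun h => hab.ne (congrArg c h)
  exact Nat.succ_lt_succ hpq

/-- A standard Young tableau is a linear extension of its diagram: any `c` onto a Young diagram
whose inverse is monotone is the cell map of a tableau. -/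
noncomputable def ofCell : SYT n where
  shape := ⟨univ.image c, by simpa using hlower⟩
  entry := entryOfCell c
  card_shape := by
    simp [card_image_of_injective _ (injective_of_le_imp_le hc)]
  row_strict i j1 j2 hj hmem := entryOfCell_lt c hlower hc (a := (i, j1)) (b := (i, j2))
    (Prod.lt_of_le_of_lt le_rfl hj) (by simpa using hmem)
  col_strict i1 i2 j hi hmem := entryOfCell_lt c hlower hc (a := (i1, j)) (b := (i2, j))
    (Prod.lt_of_lt_of_le hi le_rfl) (by simpa using hmem)
  zeros i j hmem := by
    rw [entryOfCell, dif_neg]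
    simpa [← YoungDiagram.mem_cells] using hmem
  bij m hm1 hmn := by
    have hentry (q : Fin n) : entryOfCell c (c q).1 (c q).2 = m ↔ (q : ℕ) = m - 1 := by
      rw [entryOfCell_apply c hc]
      omega
    refine ⟨c ⟨m - 1, by omega⟩, ⟨by simp, (hentry _).mpr rfl⟩, ?_⟩
    rintro _ ⟨hmem, hq⟩
    obtain ⟨q, -, rfl⟩ := mem_image.mp hmem
    exact congrArg c (Fin.ext ((hentry q).mp hq))

lemma cell_ofCell : (ofCell c hlower hc).cell = c :=
  funext fun p => ((ofCell c hlower hc).eq_cell_of_entry_eq (by simp [ofCell])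
    (entryOfCell_apply c hc p)).symm

end OfCell

noncomputable def ofWord (w : Fin n → ℕ) (hw : IsLatticeWord w) : SYT n :=
  ofCell (wordCell w) (isLowerSet_range_wordCell hw) fun _ _ => le_of_wordCell_le hw

noncomputable def equivLatticeWord : SYT n ≃ {w : Fin n → ℕ // IsLatticeWord w} where
  toFun T := ⟨T.colWord, T.isLatticeWord_colWord⟩
  invFun w := ofWord w.1 w.2
  left_inv T := ext_of_cell (show (ofWord T.colWord T.isLatticeWord_colWord).cell = T.cell by
    rw [ofWord, cell_ofCell, T.cell_eq_wordCell])
  right_inv w := Subtype.ext (funext fun p => by simp [colWord, ofWord, cell_ofCell, wordCell])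

end SYT

def IsFlatAtZeroWalk (x : Fin (n + 1) → ℕ) : Prop :=
  x 0 = 0 ∧ x (Fin.last n) = 0 ∧
    ∀ i : Fin n,
      ((x i.succ : ℤ) - (x i.castSucc : ℤ) = 1 ∨
        (x i.succ : ℤ) - (x i.castSucc : ℤ) = -1 ∨
        (x i.succ = x i.castSucc ∧ x i.castSucc = 0))

def walkWord (x : Fin (n + 1) → ℕ) (i : Fin n) : ℕ :=
  if x i.castSucc ≤ x i.succ then 0 else 1

lemma walkWord_lt_two (x : Fin (n + 1) → ℕ) (i : Fin n) : walkWord x i < 2 := by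
  unfold walkWord
  split_ifs <;> omega

/-- Reading the word backwards from the final height `0`; the truncated subtraction `0 - 1 = 0`
produces the flat steps at `0`. -/
def walkOfWord (w : Fin n → ℕ) : Fin (n + 1) → ℕ :=
  Fin.reverseInduction 0 fun i y => if w i = 0 then y - 1 else y + 1

section WalkOfWord

variable (w : Fin n → ℕ)

@[simp]
lemma walkOfWord_last : walkOfWord w (Fin.last n) = 0 :=
  Fin.reverseInduction_last

lemma walkOfWord_castSucc (i : Fin n) : walkOfWord w i.castSucc =
    if w i = 0 then walkOfWord w i.succ - 1 else walkOfWord w i.succ + 1 :=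
  Fin.reverseInduction_castSucc i

lemma walkWord_walkOfWord (hw : ∀ i, w i < 2) : walkWord (walkOfWord w) = w := by
  funext i
  have := hw i
  rw [walkWord, walkOfWord_castSucc]
  split_ifs <;> omega

variable {w}

lemma IsLatticeWord.walkOfWord_add_prefixCount_le (hw : IsLatticeWord w) (hw2 : ∀ i, w i < 2)
    (k : Fin (n + 1)) :
    walkOfWord w k + prefixCount w 1 k ≤ prefixCount w 0 k := by
  induction k using Fin.reverseInduction with
  | last => simpa using hw 0 n le_rfl
  | cast i ih =>
    have h0 := prefixCount_succ w 0 i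
    have h1 := prefixCount_succ w 1 i
    have hlat : prefixCount w 1 i ≤ prefixCount w 0 i := hw 0 i i.isLt.le
    have := hw2 i
    rw [walkOfWord_castSucc]
    simp only [Fin.val_succ, Fin.val_castSucc] at ih ⊢
    split_ifs at h0 h1 ⊢ <;> omega

lemma isFlatAtZeroWalk_walkOfWord (hw : IsLatticeWord w) (hw2 : ∀ i, w i < 2) :
    IsFlatAtZeroWalk (walkOfWord w) := by
  refine ⟨?_, walkOfWord_last w, fun i => ?_⟩
  · simpa using hw.walkOfWord_add_prefixCount_le hw2 0
  · have := hw2 i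
    rw [walkOfWord_castSucc]
    split_ifs <;> omega

end WalkOfWord

section IsFlatAtZeroWalk

variable {x : Fin (n + 1) → ℕ} (hx : IsFlatAtZeroWalk x)
include hx

lemma IsFlatAtZeroWalk.castSucc_eq (i : Fin n) :
    x i.castSucc = if walkWord x i = 0 then x i.succ - 1 else x i.succ + 1 := by
  have hstep := hx.2.2 i
  by_cases hle : x i.castSucc ≤ x i.succ
  · rw [walkWord, if_pos hle, if_pos rfl]
    omega
  · rw [walkWord, if_neg hle, if_neg one_ne_zero]
    omega

lemma IsFlatAtZeroWalk.walkOfWord_walkWord : walkOfWord (walkWord x) = x := by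
  funext k
  induction k using Fin.reverseInduction with
  | last => simp [hx.2.1]
  | cast i ih => rw [walkOfWord_castSucc, ih, hx.castSucc_eq]

lemma IsFlatAtZeroWalk.add_prefixCount_le (k : Fin (n + 1)) :
    x k + prefixCount (walkWord x) 1 k ≤ prefixCount (walkWord x) 0 k := by
  induction k using Fin.induction with
  | zero => simp [hx.1]
  | succ i ih =>
    have h0 := prefixCount_succ (walkWord x) 0 i
    have h1 := prefixCount_succ (walkWord x) 1 i
    have hstep := hx.2.2 i
    simp only [Fin.val_succ, Fin.val_castSucc] at ih ⊢
    by_cases hle : x i.castSucc ≤ x i.succ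
    · rw [walkWord, if_pos hle] at h0 h1
      simp only [if_true, zero_ne_one, if_false] at h0 h1
      omega
    · rw [walkWord, if_neg hle] at h0 h1
      simp only [if_true, one_ne_zero, if_false] at h0 h1
      omega

lemma IsFlatAtZeroWalk.isLatticeWord_walkWord : IsLatticeWord (walkWord x) := by
  rintro (_ | j) k hk
  · exact le_trans (Nat.le_add_left _ _) (hx.add_prefixCount_le ⟨k, Nat.lt_succ_of_le hk⟩)
  · have : prefixCount (walkWord x) (j + 1 + 1) k = 0 := by
      simp only [prefixCount, card_eq_zero, filter_eq_empty_iff]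
      exact fun i _ ⟨_, hi⟩ => by have := walkWord_lt_two x i; omega
    omega

end IsFlatAtZeroWalk

def flatAtZeroWalkEquiv :
    {x : Fin (n + 1) → ℕ // IsFlatAtZeroWalk x} ≃
      {w : Fin n → ℕ // IsLatticeWord w ∧ ∀ i, w i < 2} where
  toFun x := ⟨walkWord x.1, x.2.isLatticeWord_walkWord, walkWord_lt_two x.1⟩
  invFun w := ⟨walkOfWord w.1, isFlatAtZeroWalk_walkOfWord w.2.1 w.2.2⟩
  left_inv x := Subtype.ext x.2.walkOfWord_walkWord
  right_inv w := Subtype.ext (walkWord_walkOfWord w.1 w.2.2)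

/-- The number of standard Young tableaux with `n` cells and at most `2` columns
equals the number of lattice walks of length `n` on the nonnegative integers which
start and end at `0`, with steps `+1`, `-1`, `0`, where a `0` step may only be
used at position `0`. -/
theorem syt_two_cols_eq_walks (n : ℕ) :
    Nat.card {T : SYT n // T.width ≤ 2} =
      Nat.card {x : Fin (n + 1) → ℕ //
        x 0 = 0 ∧ x (Fin.last n) = 0 ∧
        ∀ i : Fin n,
          ((x i.succ : ℤ) - (x i.castSucc : ℤ) = 1 ∨
            (x i.succ : ℤ) - (x i.castSucc : ℤ) = -1 ∨
            (x i.succ = x i.castSucc ∧ x i.castSucc = 0))} :=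
  Nat.card_congr <| (SYT.equivLatticeWord.subtypeEquiv fun T => T.width_le_iff).trans <|
    (Equiv.subtypeSubtypeEquivSubtypeInter _ _).trans flatAtZeroWalkEquiv.symm
end
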